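/- (Core of Theorem 3.1) With notation as in the setup, suppose the action of G by left multiplication on the coset space G/H is 2-transitive, i.e., for any two ordered pairs of distinct cosets there is an element of G carrying the first pair to the second. Then for any two subsets S, S' ⊆ {1,…,n} with #S = #S' = 2, one has A^0_{Φ_S} = A^0_{Φ_{S'}} in ℂ[Γ]. (Combined with the Yang–Yin averaged Colmez theorem, this proves the Colmez conjecture for every CM type of the unitary CM field E = kF when G acts 2-transitively on G/H.) -/

import Mathlib

open MonoidAlgebra Finset

noncomputable section

/-- `Γ = G × ℤ/2ℤ` (written multiplicatively). -/
abbrev Gam (G : Type*) := G × Multiplicative (ZMod 2)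

/-- The element `ρ = (1,1) ∈ Γ` ("complex conjugation"). -/
def rhoEl (G : Type*) [Group G] : Gam G := (1, Multiplicative.ofAdd (1 : ZMod 2))

/-- Embedding of `g ∈ G` into `ℂ[Γ]` via `g ↦ (g,0)`. -/
def emb {G : Type*} [Group G] (g : G) : MonoidAlgebra ℂ (Gam G) :=
  MonoidAlgebra.of ℂ (Gam G) (g, 1)

/-- `ρ` as an element of `ℂ[Γ]`. -/
def rho (G : Type*) [Group G] : MonoidAlgebra ℂ (Gam G) :=
  MonoidAlgebra.of ℂ (Gam G) (rhoEl G)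

/-- `T = Σ_{g ∈ G} g ∈ ℂ[Γ]`. -/
def Tsum (G : Type*) [Group G] [Fintype G] : MonoidAlgebra ℂ (Gam G) :=
  ∑ g : G, emb g

/-- `Σ_{x ∈ H} a·x·b ∈ ℂ[Γ]`. -/
def cosetSum {G : Type*} [Group G] [Fintype G] (H : Subgroup G) [DecidablePred (· ∈ H)]
    (a b : G) : MonoidAlgebra ℂ (Gam G) :=
  ∑ x : H, emb (a * (x : G) * b)

/-- `Φ_S = T + (ρ-1)·Σ_{i∈S} Σ_{x∈H} σ_i x ∈ ℂ[Γ]`, the CM type attached to `S`. -/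
def Phi {G : Type*} [Group G] [Fintype G] (H : Subgroup G) [DecidablePred (· ∈ H)] {n : ℕ}
    (σ : Fin n → G) (S : Finset (Fin n)) : MonoidAlgebra ℂ (Gam G) :=
  Tsum G + (rho G - 1) * ∑ i ∈ S, cosetSum H (σ i) 1

/-- The ℂ-linear map `ι : ℂ[Γ] → ℂ[Γ]` sending each `γ ∈ Γ` to `γ⁻¹`. -/
def iota (Γ : Type*) [Group Γ] : MonoidAlgebra ℂ Γ →ₗ[ℂ] MonoidAlgebra ℂ Γ :=
  MonoidAlgebra.mapDomainLinearMap ℂ ℂ fun γ : Γ => γ⁻¹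

/-- `A_{Φ_S} = (1/(2hn))·Φ_S·ι(Φ_S)`. -/
def Afun {G : Type*} [Group G] [Fintype G] (H : Subgroup G) [DecidablePred (· ∈ H)] {n : ℕ}
    (σ : Fin n → G) (S : Finset (Fin n)) : MonoidAlgebra ℂ (Gam G) :=
  ((2 * (Nat.card H) * n : ℂ))⁻¹ • (Phi H σ S * iota (Gam G) (Phi H σ S))

/-- `A⁰_{Φ_S} = (1/|Γ|)·Σ_{γ∈Γ} γ·A_{Φ_S}·γ⁻¹`. -/
def A0 {G : Type*} [Group G] [Fintype G] (H : Subgroup G) [DecidablePred (· ∈ H)] {n : ℕ}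
    (σ : Fin n → G) (S : Finset (Fin n)) : MonoidAlgebra ℂ (Gam G) :=
  ((Fintype.card (Gam G) : ℂ))⁻¹ •
    ∑ γ : Gam G, MonoidAlgebra.of ℂ (Gam G) γ * Afun H σ S * MonoidAlgebra.of ℂ (Gam G) γ⁻¹

/-
Left translation by `g ∈ G` permutes the cosets `σ_i H`, so it carries `Φ_S` to `g · Φ_S = Φ_{gS}`
(the element `T` is left invariant and `ρ` is central). Hence `A_{Φ_{gS}} = g · A_{Φ_S} · g⁻¹`,
and the conjugation average `A⁰` does not see the difference. By 2-transitivity every two-element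
set of cosets is a translate of every other one.
-/

section iota

variable {Γ : Type*} [Group Γ]

lemma iota_single (γ : Γ) (r : ℂ) : iota Γ (single γ r) = single γ⁻¹ r :=
  mapDomainLinearMap_single _ _ _

lemma iota_mul (x y : MonoidAlgebra ℂ Γ) : iota Γ (x * y) = iota Γ y * iota Γ x := by
  induction x using MonoidAlgebra.induction_linear with
  | zero => simp
  | add x x' hx hx' => simp [add_mul, mul_add, hx, hx']
  | single γ r =>
    induction y using MonoidAlgebra.induction_linear with
    | zero => simp
    | add y y' hy hy' => simp [add_mul, mul_add, hy, hy']
    | single δ s => simp [single_mul_single, iota_single, mul_comm r s]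

end iota

lemma sum_conj_conj {k Γ : Type*} [Semiring k] [Group Γ] [Fintype Γ] (x : MonoidAlgebra k Γ)
    (δ : Γ) :
    ∑ γ : Γ, of k Γ γ * (of k Γ δ * x * of k Γ δ⁻¹) * of k Γ γ⁻¹
      = ∑ γ : Γ, of k Γ γ * x * of k Γ γ⁻¹ :=
  Fintype.sum_equiv (Equiv.mulRight δ) _ _ fun γ => by
    simp only [Equiv.coe_mulRight, mul_inv_rev, map_mul, mul_assoc]

section translation

variable {G : Type*} [Group G]

lemma emb_mul_emb (g g' : G) : emb g * emb g' = emb (g * g') := by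
  simp [emb]

lemma iota_emb (g : G) : iota (Gam G) (emb g) = emb g⁻¹ := by
  simp [emb, iota_single]

lemma rho_mul_emb (g : G) : rho G * emb g = emb g * rho G := by
  simp [rho, emb, rhoEl]

variable {H : Subgroup G} {n : ℕ} {σ : Fin n → G}

def cosetPerm (hσ : Function.Bijective fun i : Fin n => (σ i : G ⧸ H)) (g : G) :
    Equiv.Perm (Fin n) :=
  (Equiv.ofBijective _ hσ).symm.permCongr (MulAction.toPerm g)

lemma mk_cosetPerm (hσ : Function.Bijective fun i : Fin n => (σ i : G ⧸ H)) (g : G) (i : Fin n) :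
    (σ (cosetPerm hσ g i) : G ⧸ H) = g • (σ i : G ⧸ H) :=
  (Equiv.ofBijective _ hσ).apply_symm_apply _

lemma exists_map_cosetPerm_eq_of_card_eq_two
    (hσ : Function.Bijective fun i : Fin n => (σ i : G ⧸ H))
    (h2t : ∀ a b c d : G ⧸ H, a ≠ b → c ≠ d → ∃ g : G, g • a = c ∧ g • b = d)
    {S S' : Finset (Fin n)} (hS : S.card = 2) (hS' : S'.card = 2) :
    ∃ g : G, S.map (cosetPerm hσ g).toEmbedding = S' := by
  obtain ⟨i, j, hij, rfl⟩ := Finset.card_eq_two.mp hS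
  obtain ⟨k, l, hkl, rfl⟩ := Finset.card_eq_two.mp hS'
  obtain ⟨g, hgi, hgj⟩ := h2t _ _ _ _ (hσ.injective.ne hij) (hσ.injective.ne hkl)
  have hi : cosetPerm hσ g i = k := hσ.injective (by simp only [mk_cosetPerm, hgi])
  have hj : cosetPerm hσ g j = l := hσ.injective (by simp only [mk_cosetPerm, hgj])
  exact ⟨g, by simp [hi, hj]⟩

variable [Fintype G] [DecidablePred (· ∈ H)]

lemma emb_mul_Tsum (g : G) : emb g * Tsum G = Tsum G := by
  simp only [Tsum, Finset.mul_sum, emb_mul_emb]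
  exact Fintype.sum_equiv (Equiv.mulLeft g) _ _ fun _ => rfl

lemma emb_mul_cosetSum (g a b : G) : emb g * cosetSum H a b = cosetSum H (g * a) b := by
  simp only [cosetSum, Finset.mul_sum, emb_mul_emb, mul_assoc]

lemma cosetSum_one_eq_of_mk_eq {a b : G} (h : (a : G ⧸ H) = b) :
    cosetSum H a 1 = cosetSum H b 1 := by
  have hab : b⁻¹ * a ∈ H := QuotientGroup.eq.mp h.symm
  refine Fintype.sum_equiv (Equiv.mulLeft ⟨b⁻¹ * a, hab⟩) _ _ fun x => ?_
  simp [mul_assoc]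

lemma emb_mul_Phi (hσ : Function.Bijective fun i : Fin n => (σ i : G ⧸ H)) (g : G)
    (S : Finset (Fin n)) :
    emb g * Phi H σ S = Phi H σ (S.map (cosetPerm hσ g).toEmbedding) := by
  have hcoset (i : Fin n) : emb g * cosetSum H (σ i) 1 = cosetSum H (σ (cosetPerm hσ g i)) 1 := by
    rw [emb_mul_cosetSum]
    exact cosetSum_one_eq_of_mk_eq (mk_cosetPerm hσ g i).symm
  simp only [Phi, mul_add, emb_mul_Tsum, ← mul_assoc, mul_sub, sub_mul, rho_mul_emb, one_mul,
    Finset.sum_map, Equiv.coe_toEmbedding, ← hcoset, Finset.mul_sum]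

lemma Afun_map_cosetPerm (hσ : Function.Bijective fun i : Fin n => (σ i : G ⧸ H)) (g : G)
    (S : Finset (Fin n)) :
    Afun H σ (S.map (cosetPerm hσ g).toEmbedding)
      = of ℂ (Gam G) (g, 1) * Afun H σ S * of ℂ (Gam G) (g, 1)⁻¹ := by
  have h : of ℂ (Gam G) (g, 1)⁻¹ = emb g⁻¹ := by simp [emb]
  rw [Afun, Afun, ← emb_mul_Phi hσ, iota_mul, iota_emb, h, mul_smul_comm, smul_mul_assoc]
  simp only [emb, mul_assoc]

lemma A0_map_cosetPerm (hσ : Function.Bijective fun i : Fin n => (σ i : G ⧸ H)) (g : G)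
    (S : Finset (Fin n)) :
    A0 H σ (S.map (cosetPerm hσ g).toEmbedding) = A0 H σ S := by
  rw [A0, A0]
  simp only [Afun_map_cosetPerm hσ, sum_conj_conj]

end translation

theorem A0_card_two_eq_of_two_transitive_general {G : Type*} [Group G] [Fintype G] (H : Subgroup G)
    [DecidablePred (· ∈ H)] {n : ℕ} (σ : Fin n → G)
    (hσ : Function.Bijective fun i : Fin n => (QuotientGroup.mk (σ i) : G ⧸ H))
    (h2t : ∀ a b c d : G ⧸ H, a ≠ b → c ≠ d → ∃ g : G, g • a = c ∧ g • b = d)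
    (S S' : Finset (Fin n)) (hS : S.card = 2) (hS' : S'.card = 2) :
    A0 H σ S = A0 H σ S' := by
  obtain ⟨g, rfl⟩ := exists_map_cosetPerm_eq_of_card_eq_two hσ h2t hS hS'
  exact (A0_map_cosetPerm hσ g S).symm

/-- core of Theorem 3.1: if `G` acts 2-transitively on `G/H`, then all
`A⁰_{Φ_S}` with `#S = 2` coincide. -/
theorem A0_card_two_eq_of_two_transitive {G : Type*} [Group G] [Fintype G] (H : Subgroup G)
    [DecidablePred (· ∈ H)] {n : ℕ} (hn : 2 ≤ n) (σ : Fin n → G)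
    (hσ : Function.Bijective fun i : Fin n => (QuotientGroup.mk (σ i) : G ⧸ H))
    (h2t : ∀ a b c d : G ⧸ H, a ≠ b → c ≠ d → ∃ g : G, g • a = c ∧ g • b = d)
    (S S' : Finset (Fin n)) (hS : S.card = 2) (hS' : S'.card = 2) :
    A0 H σ S = A0 H σ S' :=
  A0_card_two_eq_of_two_transitive_general H σ hσ h2t S S' hS hS'

end
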